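/- arXiv:1507.06322 — 2 statements merged into one kernel-verified Lean document; each statement's English description precedes it below -/
import Mathlib

section
/- The functions C(v) = 2v·arsinh(v/2) − 2√(4+v²) + 4 and C*(ξ) = 4(cosh(ξ/2) − 1) are Legendre–Fenchel conjugates of each other on ℝ, i.e., C*(ξ) = sup_{v∈ℝ} (ξv − C(v)). -/
/-- The function `C(v) = 2v·arsinh(v/2) − 2√(4+v²) + 4`. -/
noncomputable def Cfun (v : ℝ) : ℝ :=
  2 * v * Real.arsinh (v / 2) - 2 * Real.sqrt (4 + v ^ 2) + 4

/-- Gradient inequality for `cosh`. -/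
lemma cosh_grad_ineq (s t : ℝ) : (t - s) * Real.sinh s ≤ Real.cosh t - Real.cosh s := by
  have h1 := Real.add_one_le_exp (t - s)
  have h2 := Real.add_one_le_exp (s - t)
  have ps := Real.exp_pos s
  have pt := Real.exp_pos t
  have ps' := Real.exp_pos (-s)
  have pt' := Real.exp_pos (-t)
  have ha : Real.exp s * Real.exp (-s) = 1 := by
    rw [← Real.exp_add]; simp
  have hb : Real.exp t * Real.exp (-t) = 1 := by
    rw [← Real.exp_add]; simp
  have h1' : (t - s + 1) * Real.exp s ≤ Real.exp t := by
    have := mul_le_mul_of_nonneg_right h1 ps.le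
    rw [← Real.exp_add] at this
    simpa using this
  have h2' : (s - t + 1) * Real.exp t ≤ Real.exp s := by
    have := mul_le_mul_of_nonneg_right h2 pt.le
    rw [← Real.exp_add] at this
    simpa using this
  have k1 : (s - t + 1) * Real.exp (-s) ≤ Real.exp (-t) := by
    have := mul_le_mul_of_nonneg_right h2' (le_of_lt (mul_pos ps' pt'))
    nlinarith [this, ha, hb]
  rw [Real.cosh_eq, Real.cosh_eq, Real.sinh_eq]
  nlinarith [h1', k1]

lemma sqrt_four_add (x : ℝ) :
    Real.sqrt (4 + (2 * Real.sinh x) ^ 2) = 2 * Real.cosh x := by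
  have h : 4 + (2 * Real.sinh x) ^ 2 = (2 * Real.cosh x) ^ 2 := by
    nlinarith [Real.cosh_sq x]
  rw [h, Real.sqrt_sq (by positivity)]

/-- `C*(ξ) = 4(cosh(ξ/2) − 1)` is the Legendre–Fenchel conjugate of `C`:
`C*(ξ) = sup_{v ∈ ℝ} (ξ·v − C(v))`. -/
theorem cstar_is_conjugate_of_C (ξ : ℝ) :
    IsLUB (Set.range fun v : ℝ => ξ * v - Cfun v)
      (4 * (Real.cosh (ξ / 2) - 1)) := by
  constructor
  · rintro _ ⟨v, rfl⟩
    set s := Real.arsinh (v / 2) with hs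
    have hv : v = 2 * Real.sinh s := by
      rw [hs, Real.sinh_arsinh]; ring
    have hsq : Real.sqrt (4 + v ^ 2) = 2 * Real.cosh s := by
      rw [hv, sqrt_four_add]
    have key := cosh_grad_ineq s (ξ / 2)
    simp only [Cfun, hsq]
    rw [show Real.arsinh (v / 2) = s from rfl, hv]
    nlinarith [key]
  · intro b hb
    have : ξ * (2 * Real.sinh (ξ / 2)) - Cfun (2 * Real.sinh (ξ / 2))
        = 4 * (Real.cosh (ξ / 2) - 1) := by
      unfold Cfun
      rw [show 2 * Real.sinh (ξ / 2) / 2 = Real.sinh (ξ / 2) by ring,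
        Real.arsinh_sinh, sqrt_four_add]
      ring
    have hmem : 4 * (Real.cosh (ξ / 2) - 1) ∈
        Set.range fun v : ℝ => ξ * v - Cfun v := ⟨2 * Real.sinh (ξ / 2), this⟩
    exact hb hmem
end

section
/- Let a, b > 0 and C*(ξ) = 4(cosh(ξ/2) − 1). Then for every ξ ∈ ℝ, inf_{τ∈ℝ} (a·C*(τ) + b·C*(ξ − τ)) = 4·√((a+b)² + (ab/2)·C*(ξ)) − 4(a+b). -/
/-- The inf-convolution formula for `C*(ξ) = 4(cosh(ξ/2) − 1)`:
`inf_τ (a·C*(τ) + b·C*(ξ−τ)) = 4√((a+b)² + (ab/2)·C*(ξ)) − 4(a+b)`. -/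
theorem cstar_inf_convolution (a b ξ : ℝ) (ha : 0 < a) (hb : 0 < b) :
    IsGLB
      (Set.range fun τ : ℝ =>
        a * (4 * (Real.cosh (τ / 2) - 1)) + b * (4 * (Real.cosh ((ξ - τ) / 2) - 1)))
      (4 * Real.sqrt ((a + b) ^ 2 + a * b / 2 * (4 * (Real.cosh (ξ / 2) - 1)))
        - 4 * (a + b)) := by
  set E := Real.exp (ξ / 2) with hE
  have hEpos : 0 < E := Real.exp_pos _
  have hcosh : Real.cosh (ξ / 2) = (E + E⁻¹) / 2 := by
    rw [Real.cosh_eq, hE, ← Real.exp_neg]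
  set A := a + b * E⁻¹ with hA
  set B := a + b * E with hB
  have hApos : 0 < A := by positivity
  have hBpos : 0 < B := by positivity
  have hargeq : (a + b) ^ 2 + a * b / 2 * (4 * (Real.cosh (ξ / 2) - 1)) = A * B := by
    rw [hcosh, hA, hB]
    field_simp
    ring
  rw [hargeq]
  -- lower bound for each τ
  have hlow : ∀ τ : ℝ, Real.sqrt (A * B)
      ≤ a * Real.cosh (τ / 2) + b * Real.cosh ((ξ - τ) / 2) := by
    intro τ
    set u := τ / 2
    set v := (ξ - τ) / 2
    have huv : Real.cosh (ξ / 2) = Real.cosh u * Real.cosh v + Real.sinh u * Real.sinh v := by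
      rw [← Real.cosh_add]; congr 1; simp [u, v]; ring
    have hAB : A * B = a ^ 2 + b ^ 2 + 2 * a * b * Real.cosh (ξ / 2) := by
      rw [hcosh, hA, hB]; field_simp; ring
    have hc1 : 1 ≤ Real.cosh u := Real.one_le_cosh u
    have hc2 : 1 ≤ Real.cosh v := Real.one_le_cosh v
    have hpos : 0 < a * Real.cosh u + b * Real.cosh v := by nlinarith
    have key : A * B ≤ (a * Real.cosh u + b * Real.cosh v) ^ 2 := by
      rw [hAB, huv]
      nlinarith [Real.cosh_sq u, Real.cosh_sq v,
        sq_nonneg (a * Real.sinh u - b * Real.sinh v)]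
    calc Real.sqrt (A * B) ≤ Real.sqrt ((a * Real.cosh u + b * Real.cosh v) ^ 2) :=
          Real.sqrt_le_sqrt key
      _ = a * Real.cosh u + b * Real.cosh v := Real.sqrt_sq hpos.le
  -- the minimizer
  set τ₀ := Real.log (B / A) with hτ₀
  set x := Real.exp (τ₀ / 2) with hx
  have hxpos : 0 < x := Real.exp_pos _
  have hx2 : x ^ 2 = B / A := by
    rw [hx, sq, ← Real.exp_add]
    have h : τ₀ / 2 + τ₀ / 2 = τ₀ := by ring
    rw [h, hτ₀, Real.exp_log (div_pos hBpos hApos)]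
  have hx2' : x ^ 2 * A = B := by rw [hx2]; field_simp
  have hcosh1 : Real.cosh (τ₀ / 2) = (x + x⁻¹) / 2 := by
    rw [Real.cosh_eq, ← Real.exp_neg]
  have hcosh2 : Real.cosh ((ξ - τ₀) / 2) = (E / x + x / E) / 2 := by
    rw [Real.cosh_eq]
    have h1 : (ξ - τ₀) / 2 = ξ / 2 - τ₀ / 2 := by ring
    rw [h1, Real.exp_sub, neg_sub, Real.exp_sub, ← hE, ← hx]
  have hval : a * Real.cosh (τ₀ / 2) + b * Real.cosh ((ξ - τ₀) / 2) = B / x := by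
    rw [hcosh1, hcosh2]
    have hE1 : E * E⁻¹ = 1 := mul_inv_cancel₀ hEpos.ne'
    field_simp
    linear_combination (-E) * hB + E * hx2' + (-E * x ^ 2) * hA + (-b * x ^ 2) * hE1
  have hsq : (B / x) ^ 2 = A * B := by
    rw [div_pow, hx2]
    field_simp
  have hBx : Real.sqrt (A * B) = B / x := by
    rw [← hsq, Real.sqrt_sq (by positivity)]
  -- assemble
  constructor
  · rintro y ⟨τ, rfl⟩
    have := hlow τ
    simp only
    linarith
  · intro c hc
    have hmem : a * (4 * (Real.cosh (τ₀ / 2) - 1)) + b * (4 * (Real.cosh ((ξ - τ₀) / 2) - 1))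
        ∈ Set.range fun τ : ℝ =>
          a * (4 * (Real.cosh (τ / 2) - 1)) + b * (4 * (Real.cosh ((ξ - τ) / 2) - 1)) :=
      ⟨τ₀, rfl⟩
    have hle := hc hmem
    have : a * (4 * (Real.cosh (τ₀ / 2) - 1)) + b * (4 * (Real.cosh ((ξ - τ₀) / 2) - 1))
        = 4 * Real.sqrt (A * B) - 4 * (a + b) := by
      rw [hBx]
      linear_combination 4 * hval
    linarith
end
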